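/- Let M be the 2x2 real diagonal matrix with distinct positive diagonal entries \rho_1 > \rho_2 > 0, let H be a halfplane {(x,y) : c1*x + c2*y + c3 > 0}, and let p \in \mathbb{R}^2. Then the set of n \in \mathbb{N} at which the orbit point p M^n lies in H changes membership status (switches from inside H to outside, or conversely) at most twice. -/

import Mathlib

/-!
Write `f n = a ρ₁ⁿ + b ρ₂ⁿ + c`. The sequence `s n = f (n + 1) - ρ₂ f n = a (ρ₁ - ρ₂) ρ₁ⁿ + c (1 - ρ₂)`
has lost the `ρ₂ⁿ` term, so it is monotone or antitone. Where `f` becomes positive `s > 0`, and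
where it stops being positive `s < 0`. Two sign changes of `f` in the same direction enclose one in
the opposite direction, so `s` would change sign twice, which a monotone sequence cannot do.
-/

theorem Nat.exists_drop_between {P : ℕ → Prop} {m n : ℕ} (hmn : m ≤ n) (hm : P m) (hn : ¬ P n) :
    ∃ k, m ≤ k ∧ k < n ∧ P k ∧ ¬ P (k + 1) := by
  induction n, hmn using Nat.le_induction with
  | base => exact absurd hm hn
  | succ n hmn ih =>
    by_cases hPn : P n
    · exact ⟨n, hmn, n.lt_succ_self, hPn, hn⟩
    · obtain ⟨k, hmk, hkn, hk⟩ := ih hPn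
      exact ⟨k, hmk, hkn.trans n.lt_succ_self, hk⟩

section SignChanges

variable {P : ℕ → Prop} {s : ℕ → ℝ}

theorem false_of_two_drops (hs : Monotone s ∨ Antitone s)
    (hrise : ∀ n, ¬ P n → P (n + 1) → 0 < s n) (hdrop : ∀ n, P n → ¬ P (n + 1) → s n < 0)
    {i j : ℕ} (hij : i < j) (hi : P i ∧ ¬ P (i + 1)) (hj : P j ∧ ¬ P (j + 1)) : False := by
  obtain ⟨k, hik, hkj, hk, hk'⟩ :=
    Nat.exists_drop_between (P := (¬ P ·)) hij hi.2 (not_not_intro hj.1)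
  have hsk := hrise k hk (not_not.1 hk')
  have hsi := hdrop i hi.1 hi.2
  have hsj := hdrop j hj.1 hj.2
  rcases hs with hs | hs
  · linarith [hs hkj.le]
  · linarith [hs (i.le_succ.trans hik)]

theorem false_of_two_changes_of_iff (hs : Monotone s ∨ Antitone s)
    (hrise : ∀ n, ¬ P n → P (n + 1) → 0 < s n) (hdrop : ∀ n, P n → ¬ P (n + 1) → s n < 0)
    {i j : ℕ} (hij : i < j) (hPij : P i ↔ P j)
    (hi : ¬ (P i ↔ P (i + 1))) (hj : ¬ (P j ↔ P (j + 1))) : False := by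
  by_cases hPi : P i
  · exact false_of_two_drops hs hrise hdrop hij ⟨hPi, by tauto⟩ ⟨hPij.1 hPi, by tauto⟩
  · -- a rise of `P` is a drop of `¬ P`, and `-s` has the signs reversed
    refine false_of_two_drops (P := (¬ P ·)) (s := -s) (hs.symm.imp Antitone.neg Monotone.neg)
      (fun n h h' => neg_pos.2 (hdrop n (not_not.1 h) h'))
      (fun n h h' => neg_neg_iff_pos.2 (hrise n h (not_not.1 h'))) hij
      ⟨hPi, by tauto⟩ ⟨fun h => hPi (hPij.2 h), by tauto⟩

theorem not_three_changes (hs : Monotone s ∨ Antitone s)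
    (hrise : ∀ n, ¬ P n → P (n + 1) → 0 < s n) (hdrop : ∀ n, P n → ¬ P (n + 1) → s n < 0)
    {n₁ n₂ n₃ : ℕ} (h₁₂ : n₁ < n₂) (h₂₃ : n₂ < n₃) :
    ¬ (¬ (P n₁ ↔ P (n₁ + 1)) ∧ ¬ (P n₂ ↔ P (n₂ + 1)) ∧ ¬ (P n₃ ↔ P (n₃ + 1))) := by
  rintro ⟨h₁, h₂, h₃⟩
  by_cases hP₁₂ : P n₁ ↔ P n₂
  · exact false_of_two_changes_of_iff hs hrise hdrop h₁₂ hP₁₂ h₁ h₂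
  by_cases hP₁₃ : P n₁ ↔ P n₃
  · exact false_of_two_changes_of_iff hs hrise hdrop (h₁₂.trans h₂₃) hP₁₃ h₁ h₃
  exact false_of_two_changes_of_iff hs hrise hdrop h₂₃ (by tauto) h₂ h₃

end SignChanges

theorem monotone_or_antitone_mul_pow_add (A C : ℝ) {r : ℝ} (hr : 0 ≤ r) :
    Monotone (fun n : ℕ => A * r ^ n + C) ∨ Antitone (fun n : ℕ => A * r ^ n + C) := by
  rcases le_total 1 r with h1 | h1 <;> rcases le_total 0 A with hA | hA
  · exact .inl (((pow_right_mono₀ h1).const_mul hA).add_const C)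
  · exact .inr (((pow_right_mono₀ h1).const_mul_of_nonpos hA).add_const C)
  · exact .inr (((pow_right_anti₀ hr h1).const_mul hA).add_const C)
  · exact .inl (((pow_right_anti₀ hr h1).const_mul_of_nonpos hA).add_const C)

theorem not_three_sign_changes_mul_pow_add_mul_pow_add {a b c ρ₁ ρ₂ : ℝ} (hρ₁ : 0 ≤ ρ₁)
    (hρ₂ : 0 < ρ₂) {n₁ n₂ n₃ : ℕ} (h₁₂ : n₁ < n₂) (h₂₃ : n₂ < n₃) :
    let f : ℕ → ℝ := fun n => a * ρ₁ ^ n + b * ρ₂ ^ n + c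
    ¬ (¬ (0 < f n₁ ↔ 0 < f (n₁ + 1)) ∧ ¬ (0 < f n₂ ↔ 0 < f (n₂ + 1)) ∧
      ¬ (0 < f n₃ ↔ 0 < f (n₃ + 1))) := by
  intro f
  have hs (n : ℕ) : f (n + 1) - ρ₂ * f n = a * (ρ₁ - ρ₂) * ρ₁ ^ n + c * (1 - ρ₂) := by
    simp only [f, pow_succ]
    ring
  refine not_three_changes (P := fun n => 0 < f n) (s := fun n => f (n + 1) - ρ₂ * f n) ?_ ?_ ?_ h₁₂ h₂₃
  · simpa only [hs] using monotone_or_antitone_mul_pow_add _ _ hρ₁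
  · intro n h h'
    nlinarith [not_lt.1 h]
  · intro n h h'
    nlinarith [not_lt.1 h']

/-- For the diagonal matrix `M = diag(ρ1, ρ2)` with `ρ1 > ρ2 > 0`, a point `p = (x,y)`,
and the halfplane `H = {(u,w) : c1*u + c2*w + c3 > 0}`, the membership of the orbit
point `p Mⁿ` in `H` changes at most twice as `n` ranges over `ℕ`. -/
theorem diagonal_orbit_halfplane_at_most_two_switches
    (ρ1 ρ2 c1 c2 c3 x y : ℝ) (h21 : ρ2 < ρ1) (h2 : 0 < ρ2) :
    let M : Matrix (Fin 2) (Fin 2) ℝ := Matrix.diagonal ![ρ1, ρ2]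
    let inH : ℕ → Prop := fun n =>
      0 < c1 * (Matrix.vecMul ![x, y] (M ^ n)) 0
          + c2 * (Matrix.vecMul ![x, y] (M ^ n)) 1 + c3
    ∀ n1 n2 n3 : ℕ, n1 < n2 → n2 < n3 →
      ¬(¬(inH n1 ↔ inH (n1 + 1)) ∧ ¬(inH n2 ↔ inH (n2 + 1)) ∧
        ¬(inH n3 ↔ inH (n3 + 1))) := by
  intro M inH n1 n2 n3 h12 h23
  have hinH : inH = fun n => 0 < c1 * x * ρ1 ^ n + c2 * y * ρ2 ^ n + c3 := by
    funext n
    simp [inH, M, Matrix.diagonal_pow, Matrix.vecMul_diagonal, mul_assoc]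
  rw [hinH]
  exact not_three_sign_changes_mul_pow_add_mul_pow_add (h2.trans h21).le h2 h12 h23
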